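/- arXiv:2108.10594 — 3 statements merged into one kernel-verified Lean document; each statement's English description precedes it below -/
import Mathlib

section
/- Let 0 < δ < 1, let v = (1−δ) Σ_{t=0}^∞ δ^t v(0) M^t be the discounted mean distribution of the full chain, and let ν = (1−δ) Σ_{t=0}^∞ δ^t ν(0) (M'')^t be the discounted mean distribution of the m-strategy reduced chain. Then for every A ∈ {C,D} and every tuple (x_1,…,x_m) with x_i ∈ {0,…,k_i}: ν_{(A,x_1,…,x_m)} = Σ_{h ∈ A_{A,x_1,…,x_m}} v_h. -/
open Finset Matrix
open scoped Classical

noncomputable section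

/-- A memory-1 strategy: an initial cooperation probability `init` and conditional
cooperation probabilities `cond A j`: the probability to cooperate in the next round
when one's own action in the current round was `A` (`true` = cooperate) and exactly
`j` co-players cooperated. -/
structure Mem1 where
  init : ℝ
  cond : Bool → ℕ → ℝ

/-- All entries of the strategy lie in `[0,1]`. -/
def Mem1.valid (p : Mem1) : Prop :=
  p.init ∈ Set.Icc (0:ℝ) 1 ∧ ∀ A j, p.cond A j ∈ Set.Icc (0:ℝ) 1

/-- A full state: the action of each of the `n` players (`true` = cooperate). -/
abbrev FullState (n : ℕ) := Fin n → Bool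

/-- The number of cooperators `σ(h)` in a full state. -/
def nCoop {n : ℕ} (h : FullState n) : ℕ :=
  (Finset.univ.filter fun i => h i = true).card

/-- The full transition matrix `M` on the `2^n` full states, given each player's
memory-1 strategy: `m_{h,h'} = ∏ i u_i`, where `u_i` is player `i`'s probability of
choosing action `h' i` given that in state `h` his action was `h i` and
`σ(h) - f(h i)` of his co-players cooperated. -/
def fullM {n : ℕ} (strat : Fin n → Mem1) : Matrix (FullState n) (FullState n) ℝ :=
  Matrix.of fun h h' => ∏ i,
    (if h' i then (strat i).cond (h i) (nCoop h - if h i then 1 else 0)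
     else 1 - (strat i).cond (h i) (nCoop h - if h i then 1 else 0))

/-- The initial full-state distribution `v(0)`: each player cooperates independently
with the initial probability of his own strategy, `v(0)_h = ∏ i |1 - f(A_i) - p^i_0|`. -/
def fullInit {n : ℕ} (strat : Fin n → Mem1) : FullState n → ℝ :=
  fun h => ∏ i, |1 - (if h i then (1:ℝ) else 0) - (strat i).init|

/-- Binomial transfer factor: for a block of `tot` co-players of one strategy of which
`x` cooperated in the last round, the probability that exactly `x'` of them cooperate
in the next round, where previous cooperators cooperate with probability `pc` and
previous defectors with probability `pd`:
`Σ_{j=0}^{x'} C(x,j) pc^j (1-pc)^{x-j} C(tot-x, x'-j) pd^{x'-j} (1-pd)^{(tot-x)-(x'-j)}`. -/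
def transfer (pc pd : ℝ) (x tot x' : ℕ) : ℝ :=
  ∑ j ∈ Finset.range (x' + 1),
    (x.choose j : ℝ) * pc ^ j * (1 - pc) ^ (x - j) *
    ((tot - x).choose (x' - j) : ℝ) * pd ^ (x' - j) * (1 - pd) ^ ((tot - x) - (x' - j))

/-- The discounted mean distribution `(1-δ) Σ_{t=0}^∞ δ^t (w₀ T^t)`. -/
def discMean {α : Type*} [Fintype α] [DecidableEq α]
    (δ : ℝ) (w0 : α → ℝ) (T : Matrix α α ℝ) : α → ℝ :=
  fun j => (1 - δ) * ∑' t : ℕ, δ ^ t * (w0 ᵥ* T ^ t) j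

/-- The focal player's one-round payoff in full state `h`: `a_{σ(h)-1}` if he
cooperates, `b_{σ(h)}` if he defects. -/
def focalPayoff {n : ℕ} (focal : Fin n) (a b : ℕ → ℝ) (h : FullState n) : ℝ :=
  if h focal then a (nCoop h - 1) else b (nCoop h)

/-- Strategy assignment for `m` strategies: player `i` uses strategy `ps (assign i)`. -/
def stratM {n m : ℕ} (ps : Fin m → Mem1) (assign : Fin n → Fin m) : Fin n → Mem1 :=
  fun i => ps (assign i)

/-- The clustered state space for `m` strategies: the focal action together with, for
each strategy index `i`, the number `x i ∈ {0,…,k_i}` of cooperators among the `k_i`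
co-players using strategy `i`. -/
abbrev RStateM {m : ℕ} (ks : Fin m → ℕ) := Bool × ((i : Fin m) → Fin (ks i + 1))

/-- The cluster `A_{A,x_1,…,x_m}`: full states in which the focal player plays `A` and,
for every `i`, exactly `x i` of the co-players using strategy `i` cooperate. -/
def clusterM {n m : ℕ} (focal : Fin n) (assign : Fin n → Fin m) (ks : Fin m → ℕ)
    (A : Bool) (x : (i : Fin m) → Fin (ks i + 1)) : Finset (FullState n) :=
  Finset.univ.filter fun h =>
    h focal = A ∧
    ∀ i, (Finset.univ.filter fun j => j ≠ focal ∧ assign j = i ∧ h j = true).card = (x i : ℕ)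

/-- The `m`-strategy reduced transition matrix `M''` on the `2 ∏ (k_i+1)` clustered
states, for a focal player using strategy `ps i0`. -/
def redMM {m : ℕ} (ps : Fin m → Mem1) (ks : Fin m → ℕ) (i0 : Fin m) :
    Matrix (RStateM ks) (RStateM ks) ℝ :=
  Matrix.of fun s s' =>
    match s, s' with
    | (A, x), (A', x') =>
      |1 - (if A' then (1:ℝ) else 0) - (ps i0).cond A (∑ i, (x i : ℕ))| *
      ∏ i, transfer ((ps i).cond true ((∑ i', (x i' : ℕ)) + (if A then 1 else 0) - 1))
                    ((ps i).cond false ((∑ i', (x i' : ℕ)) + (if A then 1 else 0)))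
                    (x i : ℕ) (ks i) (x' i : ℕ)

/-- The initial clustered distribution `ν(0)` for `m` strategies. -/
def redInitM {m : ℕ} (ps : Fin m → Mem1) (ks : Fin m → ℕ) (i0 : Fin m) :
    RStateM ks → ℝ :=
  fun s => match s with
  | (A, x) =>
    |1 - (if A then (1:ℝ) else 0) - (ps i0).init| *
    ∏ i, (((ks i).choose (x i : ℕ) : ℝ) * (ps i).init ^ (x i : ℕ) *
          (1 - (ps i).init) ^ (ks i - (x i : ℕ)))

/-! Grouping full states by their cluster label (the focal action and the number of cooperators
among the co-players of each strategy) lumps the full chain onto the reduced one. Given the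
current state, players act independently, so the number of cooperators in a block of co-players
has generating polynomial `∏ (p_j X + 1 - p_j)`; inside a block only two values of `p_j` occur
(for previous cooperators and previous defectors), so its coefficients are the binomial
convolutions `transfer`. Hence the probability of moving from a full state into a cluster depends
only on the cluster of the state and is the corresponding entry of `M''`, and the same computation
aggregates `v(0)` to `ν(0)`. Therefore `ν(0) M''^t` aggregates `v(0) M^t` for every `t`, and so do
the discounted sums, which converge because `M` is stochastic. -/
section GeneratingPolynomial
open Polynomial

variable {ι R : Type*} [DecidableEq ι] [CommSemiring R]

theorem sum_powersetCard_prod_ite_eq_coeff (s : Finset ι) (a b : ι → R) (k : ℕ) :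
    ∑ T ∈ s.powersetCard k, ∏ j ∈ s, (if j ∈ T then a j else b j)
      = (∏ j ∈ s, (C (a j) * X + C (b j))).coeff k := by
  rw [prod_add, finsetSum_coeff, powersetCard_eq_filter, sum_filter]
  refine sum_congr rfl fun T hT => ?_
  have hsplit :
      (∏ j ∈ s, if j ∈ T then a j else b j) = (∏ j ∈ T, a j) * ∏ j ∈ s \ T, b j := by
    have h := prod_piecewise s T a b
    rwa [inter_eq_right.mpr (mem_powerset.mp hT)] at h
  rw [prod_mul_distrib, prod_const, ← map_prod, ← map_prod, mul_right_comm, ← map_mul,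
    coeff_C_mul_X_pow, hsplit]
  simp only [eq_comm]

theorem coeff_C_mul_X_add_C_pow (p q : R) (n k : ℕ) :
    ((C p * X + C q) ^ n).coeff k = n.choose k * p ^ k * q ^ (n - k) := by
  rw [add_pow, finsetSum_coeff]
  simp only [mul_pow, ← C_pow, ← C_eq_natCast, mul_right_comm _ (X ^ _), ← map_mul,
    coeff_C_mul_X_pow]
  rw [sum_ite_eq]
  split_ifs with h
  · ring
  · rw [Nat.choose_eq_zero_of_lt (by simpa using h)]; simp

theorem sum_powersetCard_prod_bernoulli_eq_transfer (s : Finset ι) (g : ι → Bool)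
    (pc pd : ℝ) (k : ℕ) :
    ∑ T ∈ s.powersetCard k, ∏ j ∈ s,
        (if j ∈ T then (if g j then pc else pd) else 1 - (if g j then pc else pd))
      = transfer pc pd #(s.filter (g · = true)) #s k := by
  rw [sum_powersetCard_prod_ite_eq_coeff, ← prod_filter_mul_prod_filter_not s (g · = true)]
  have hC : ∏ j ∈ s.filter (g · = true), (C (if g j then pc else pd) * X
      + C (1 - if g j then pc else pd)) = (C pc * X + C (1 - pc)) ^ #(s.filter (g · = true)) :=
    prod_eq_pow_card fun j hj => by rw [(mem_filter.mp hj).2, if_pos rfl]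
  have hD : ∏ j ∈ s.filter (¬g · = true), (C (if g j then pc else pd) * X
      + C (1 - if g j then pc else pd))
        = (C pd * X + C (1 - pd)) ^ (#s - #(s.filter (g · = true))) := by
    rw [← card_filter_add_card_filter_not (s := s) (g · = true), Nat.add_sub_cancel_left]
    exact prod_eq_pow_card fun j hj => by rw [if_neg (mem_filter.mp hj).2]
  rw [hC, hD, coeff_mul, Nat.sum_antidiagonal_eq_sum_range_succ_mk, transfer]
  refine sum_congr rfl fun j _ => ?_
  simp only [coeff_C_mul_X_add_C_pow]
  ring

end GeneratingPolynomial

section Clusters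

variable {n m : ℕ} (focal : Fin n) (assign : Fin n → Fin m)

def coplayers (i : Fin m) : Finset (Fin n) :=
  univ.filter fun j => j ≠ focal ∧ assign j = i

variable {focal assign}

theorem mem_coplayers {i : Fin m} {j : Fin n} :
    j ∈ coplayers focal assign i ↔ j ≠ focal ∧ assign j = i := by
  simp [coplayers]

theorem mem_clusterM {ks : Fin m → ℕ} {A : Bool} {x : (i : Fin m) → Fin (ks i + 1)}
    {h : FullState n} :
    h ∈ clusterM focal assign ks A x ↔
      h focal = A ∧ ∀ i, #((coplayers focal assign i).filter (h · = true)) = x i := by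
  simp only [clusterM, coplayers, filter_filter, mem_filter, mem_univ, true_and, and_assoc]

variable (focal assign) in
@[to_additive]
theorem prod_univ_eq_mul_prod_coplayers {M : Type*} [CommMonoid M] (F : Fin n → M) :
    ∏ j, F j = F focal * ∏ i, ∏ j ∈ coplayers focal assign i, F j := by
  rw [← mul_prod_erase univ F (mem_univ focal), ← prod_fiberwise (univ.erase focal) assign F]
  congr 2 with i
  congr 1 with j
  simp [mem_coplayers, and_comm]

theorem nCoop_of_mem_clusterM {ks : Fin m → ℕ} {A : Bool} {x : (i : Fin m) → Fin (ks i + 1)}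
    {h : FullState n} (hh : h ∈ clusterM focal assign ks A x) :
    nCoop h = ∑ i, (x i : ℕ) + if A then 1 else 0 := by
  obtain ⟨hfocal, hcount⟩ := mem_clusterM.mp hh
  simp only [nCoop, card_filter, sum_univ_eq_add_sum_coplayers focal assign, ← hcount, hfocal]
  ring

variable (focal assign) in
def clusterLabel {ks : Fin m → ℕ} (hcard : ∀ i, #(coplayers focal assign i) = ks i)
    (h : FullState n) : RStateM ks :=
  (h focal, fun i => ⟨#((coplayers focal assign i).filter (h · = true)),
    Nat.lt_succ_of_le (hcard i ▸ card_filter_le _ _)⟩)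

theorem clusterM_eq_filter_clusterLabel {ks : Fin m → ℕ}
    (hcard : ∀ i, #(coplayers focal assign i) = ks i) (A : Bool)
    (x : (i : Fin m) → Fin (ks i + 1)) :
    clusterM focal assign ks A x = univ.filter (clusterLabel focal assign hcard · = (A, x)) := by
  ext h
  simp only [mem_clusterM, mem_filter, mem_univ, true_and, clusterLabel, Prod.ext_iff,
    funext_iff, Fin.ext_iff]

theorem mem_clusterM_clusterLabel {ks : Fin m → ℕ}
    (hcard : ∀ i, #(coplayers focal assign i) = ks i) (h : FullState n) :
    h ∈ clusterM focal assign ks (clusterLabel focal assign hcard h).1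
      (clusterLabel focal assign hcard h).2 := by
  rw [clusterM_eq_filter_clusterLabel hcard, mem_filter]
  exact ⟨mem_univ h, rfl⟩

variable (focal assign) in
def stateOfCoopSets (A : Bool) (S : Fin m → Finset (Fin n)) : FullState n :=
  fun j => if j = focal then A else decide (j ∈ S (assign j))

theorem filter_stateOfCoopSets {A : Bool} {S : Fin m → Finset (Fin n)} {i : Fin m}
    (hS : S i ⊆ coplayers focal assign i) :
    (coplayers focal assign i).filter (stateOfCoopSets focal assign A S · = true) = S i := by
  refine Finset.ext fun j => ?_
  rw [mem_filter]
  constructor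
  · rintro ⟨hj, hjS⟩
    obtain ⟨hjf, rfl⟩ := mem_coplayers.mp hj
    simpa [stateOfCoopSets, hjf] using hjS
  · intro hj
    refine ⟨hS hj, ?_⟩
    obtain ⟨hjf, rfl⟩ := mem_coplayers.mp (hS hj)
    simpa [stateOfCoopSets, hjf] using hj

theorem stateOfCoopSets_filter {A : Bool} {h : FullState n} (hA : h focal = A) :
    stateOfCoopSets focal assign A (fun i => (coplayers focal assign i).filter (h · = true))
      = h := by
  funext j
  by_cases hj : j = focal
  · simp [stateOfCoopSets, hj, hA]
  · cases hh : h j <;> simp [stateOfCoopSets, hj, hh, mem_coplayers]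

theorem sum_clusterM_prod {R : Type*} [CommSemiring R] {ks : Fin m → ℕ} (A : Bool)
    (x : (i : Fin m) → Fin (ks i + 1)) (q : Fin n → Bool → R) :
    ∑ h ∈ clusterM focal assign ks A x, ∏ j, q j (h j)
      = q focal A * ∏ i, ∑ T ∈ (coplayers focal assign i).powersetCard (x i),
          ∏ j ∈ coplayers focal assign i, if j ∈ T then q j true else q j false := by
  rw [prod_univ_sum, mul_sum]
  refine sum_nbij' (fun h i => (coplayers focal assign i).filter (h · = true))
    (stateOfCoopSets focal assign A) ?_ ?_ ?_ ?_ ?_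
  · intro h hh
    simpa [mem_powersetCard] using (mem_clusterM.mp hh).2
  · intro S hS
    simp only [Fintype.mem_piFinset, mem_powersetCard] at hS
    rw [mem_clusterM]
    refine ⟨by simp [stateOfCoopSets], fun i => ?_⟩
    rw [filter_stateOfCoopSets (hS i).1, (hS i).2]
  · intro h hh
    exact stateOfCoopSets_filter (mem_clusterM.mp hh).1
  · intro S hS
    simp only [Fintype.mem_piFinset, mem_powersetCard] at hS
    funext i
    exact filter_stateOfCoopSets (hS i).1
  · intro h hh
    rw [prod_univ_eq_mul_prod_coplayers focal assign, (mem_clusterM.mp hh).1]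
    congr 1
    refine prod_congr rfl fun i _ => prod_congr rfl fun j hj => ?_
    cases hhj : h j <;> simp [hhj, hj]

end Clusters

theorem abs_one_sub_ite_sub {p : ℝ} (hp : p ∈ Set.Icc 0 1) (b : Bool) :
    |1 - (if b then 1 else 0) - p| = if b then p else 1 - p := by
  obtain ⟨h0, h1⟩ := hp
  cases b
  · simpa using h1
  · simpa using h0

section Aggregation

variable {n m : ℕ} {ps : Fin m → Mem1} {ks : Fin m → ℕ} {i0 : Fin m} {focal : Fin n}
  {assign : Fin n → Fin m}

theorem sum_clusterM_fullInit (hps : ∀ i, (ps i).valid) (hassign : assign focal = i0)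
    (hcard : ∀ i, #(coplayers focal assign i) = ks i) (A : Bool)
    (x : (i : Fin m) → Fin (ks i + 1)) :
    ∑ h ∈ clusterM focal assign ks A x, fullInit (stratM ps assign) h
      = redInitM ps ks i0 (A, x) := by
  refine (sum_clusterM_prod A x fun j b =>
    |1 - (if b then 1 else 0) - (ps (assign j)).init|).trans ?_
  dsimp only [redInitM]
  rw [hassign]
  congr 1
  refine prod_congr rfl fun i _ => ?_
  have hblock : ∀ T : Finset (Fin n), (∏ j ∈ coplayers focal assign i,
      if j ∈ T then |1 - (if true then 1 else 0) - (ps (assign j)).init|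
        else |1 - (if false then 1 else 0) - (ps (assign j)).init|)
      = ∏ j ∈ coplayers focal assign i, if j ∈ T then (ps i).init else 1 - (ps i).init :=
    fun T => prod_congr rfl fun j hj => by
      rw [(mem_coplayers.mp hj).2, abs_one_sub_ite_sub (hps i).1,
        abs_one_sub_ite_sub (hps i).1]
      rfl
  rw [sum_congr rfl fun T _ => hblock T, sum_powersetCard_prod_ite_eq_coeff, prod_const, hcard,
    coeff_C_mul_X_add_C_pow]

theorem sum_clusterM_fullM (hps : ∀ i, (ps i).valid) (hassign : assign focal = i0)
    (hcard : ∀ i, #(coplayers focal assign i) = ks i) {A : Bool}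
    {x : (i : Fin m) → Fin (ks i + 1)} {h : FullState n} (hh : h ∈ clusterM focal assign ks A x)
    (A' : Bool) (x' : (i : Fin m) → Fin (ks i + 1)) :
    ∑ h' ∈ clusterM focal assign ks A' x', fullM (stratM ps assign) h h'
      = redMM ps ks i0 (A, x) (A', x') := by
  obtain ⟨hfocal, hcount⟩ := mem_clusterM.mp hh
  have hnCoop := nCoop_of_mem_clusterM hh
  set c : Fin n → ℝ := fun j => (ps (assign j)).cond (h j) (nCoop h - if h j then 1 else 0)
  refine (sum_clusterM_prod A' x' fun j b => if b then c j else 1 - c j).trans ?_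
  dsimp only [redMM, of_apply]
  congr 1
  · have hc : c focal = (ps i0).cond A (∑ i, (x i : ℕ)) := by
      simp only [c, hassign, hfocal, hnCoop, Nat.add_sub_cancel]
    rw [hc, abs_one_sub_ite_sub ((hps i0).2 A _)]
  refine prod_congr rfl fun i _ => ?_
  set S := ∑ i, (x i : ℕ) + if A then 1 else 0
  have hc : ∀ j ∈ coplayers focal assign i,
      c j = if h j then (ps i).cond true (S - 1) else (ps i).cond false S := by
    intro j hj
    simp only [c, ← (mem_coplayers.mp hj).2, hnCoop]
    cases h j <;> rfl
  have hblock : ∀ T : Finset (Fin n), (∏ j ∈ coplayers focal assign i,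
      if j ∈ T then (if true then c j else 1 - c j) else (if false then c j else 1 - c j))
      = ∏ j ∈ coplayers focal assign i, if j ∈ T then
          (if h j then (ps i).cond true (S - 1) else (ps i).cond false S)
          else 1 - (if h j then (ps i).cond true (S - 1) else (ps i).cond false S) :=
    fun T => prod_congr rfl fun j hj => by rw [← hc j hj]; rfl
  rw [sum_congr rfl fun T _ => hblock T, sum_powersetCard_prod_bernoulli_eq_transfer, hcount,
    hcard]

end Aggregation

section Lumping

variable {α β : Type*} [Fintype α] [Fintype β] [DecidableEq β]
  {π : α → β} {T : Matrix α α ℝ} {R : Matrix β β ℝ}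

def lumpVec (π : α → β) (w : α → ℝ) : β → ℝ :=
  fun b => ∑ a with π a = b, w a

/-- Strong lumpability in the sense of Kemeny and Snell, with `R` the lumped chain. -/
def IsLumping (π : α → β) (T : Matrix α α ℝ) (R : Matrix β β ℝ) : Prop :=
  ∀ a b, ∑ a' with π a' = b, T a a' = R (π a) b

theorem IsLumping.lumpVec_vecMul (hTR : IsLumping π T R) (w : α → ℝ) :
    lumpVec π w ᵥ* R = lumpVec π (w ᵥ* T) := by
  funext b
  calc (lumpVec π w ᵥ* R) b = ∑ a, w a * R (π a) b := by
        simp only [lumpVec, vecMul, dotProduct, sum_mul]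
        rw [← sum_fiberwise univ π]
        exact sum_congr rfl fun b' _ => sum_congr rfl fun a ha => by rw [(mem_filter.mp ha).2]
    _ = lumpVec π (w ᵥ* T) b := by
        simp only [lumpVec, ← hTR _ b, mul_sum, vecMul, dotProduct]
        exact sum_comm

theorem IsLumping.lumpVec_vecMul_pow [DecidableEq α] (hTR : IsLumping π T R) (w : α → ℝ)
    (t : ℕ) : lumpVec π w ᵥ* R ^ t = lumpVec π (w ᵥ* T ^ t) := by
  induction t with
  | zero => simp only [pow_zero, vecMul_one]
  | succ t ih => rw [pow_succ, ← vecMul_vecMul, ih, hTR.lumpVec_vecMul, pow_succ, vecMul_vecMul]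

theorem IsLumping.discMean_lumpVec [DecidableEq α] (hTR : IsLumping π T R) (w : α → ℝ)
    {δ : ℝ} (hsum : ∀ a, Summable fun t => δ ^ t * (w ᵥ* T ^ t) a) (b : β) :
    discMean δ (lumpVec π w) R b = ∑ a with π a = b, discMean δ w T a := by
  simp only [discMean, hTR.lumpVec_vecMul_pow, lumpVec, ← mul_sum]
  rw [← Summable.tsum_finsetSum fun a _ => hsum a]
  simp only [mul_sum]

end Lumping

section Stochastic

variable {α : Type*} [Fintype α] [DecidableEq α]

theorem sum_vecMul_of_mem_rowStochastic {P : Matrix α α ℝ} (hP : P ∈ rowStochastic ℝ α)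
    (w : α → ℝ) : ∑ a, (w ᵥ* P) a = ∑ a, w a := by
  rw [← dotProduct_one, ← dotProduct_one, ← dotProduct_mulVec, hP.2]

theorem summable_geometric_mul_vecMul_pow {δ : ℝ} (hδ0 : 0 ≤ δ) (hδ1 : δ < 1)
    {w : α → ℝ} (hw : ∀ a, 0 ≤ w a) {P : Matrix α α ℝ} (hP : P ∈ rowStochastic ℝ α)
    (a : α) :
    Summable fun t => δ ^ t * (w ᵥ* P ^ t) a := by
  have hnonneg t := nonneg_vecMul_of_mem_rowStochastic (pow_mem hP t) hw
  refine Summable.of_nonneg_of_le (fun t => mul_nonneg (pow_nonneg hδ0 t) (hnonneg t a))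
    (fun t => ?_) ((summable_geometric_of_lt_one hδ0 hδ1).mul_right (∑ a, w a))
  gcongr
  calc (w ᵥ* P ^ t) a ≤ ∑ a', (w ᵥ* P ^ t) a' :=
        single_le_sum (fun a' _ => hnonneg t a') (mem_univ a)
    _ = ∑ a', w a' := sum_vecMul_of_mem_rowStochastic (pow_mem hP t) w

end Stochastic

theorem fullM_mem_rowStochastic {n : ℕ} {strat : Fin n → Mem1} (hs : ∀ j, (strat j).valid) :
    fullM strat ∈ rowStochastic ℝ (FullState n) := by
  rw [mem_rowStochastic_iff_sum]
  simp only [fullM, of_apply]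
  refine ⟨fun h h' => prod_nonneg fun j _ => ?_, fun h => ?_⟩
  · obtain ⟨h0, h1⟩ := (hs j).2 (h j) (nCoop h - if h j then 1 else 0)
    split <;> linarith
  · refine (Fintype.prod_sum fun j (b : Bool) =>
      if b then (strat j).cond (h j) (nCoop h - if h j then 1 else 0)
      else 1 - (strat j).cond (h j) (nCoop h - if h j then 1 else 0)).symm.trans ?_
    exact prod_eq_one fun j _ => by simp

theorem state_clustering_discounted_m_general (n m : ℕ)
    (ps : Fin m → Mem1) (hps : ∀ i, (ps i).valid)
    (ks : Fin m → ℕ) (i0 : Fin m)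
    (focal : Fin n)
    (assign : Fin n → Fin m) (hassign : assign focal = i0)
    (hcard : ∀ i, (Finset.univ.filter fun j => j ≠ focal ∧ assign j = i).card = ks i)
    (δ : ℝ) (hδ0 : 0 < δ) (hδ1 : δ < 1) :
    ∀ (A : Bool) (x : (i : Fin m) → Fin (ks i + 1)),
      discMean δ (redInitM ps ks i0) (redMM ps ks i0) (A, x)
        = ∑ h ∈ clusterM focal assign ks A x,
            discMean δ (fullInit (stratM ps assign)) (fullM (stratM ps assign)) h := by
  intro A x
  have hcard' : ∀ i, #(coplayers focal assign i) = ks i := hcard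
  set label := clusterLabel focal assign hcard'
  have hinit : redInitM ps ks i0 = lumpVec label (fullInit (stratM ps assign)) := by
    funext ⟨A', x'⟩
    rw [lumpVec, ← clusterM_eq_filter_clusterLabel, sum_clusterM_fullInit hps hassign hcard']
  have hTR : IsLumping label (fullM (stratM ps assign)) (redMM ps ks i0) := by
    rintro h ⟨A', x'⟩
    rw [← clusterM_eq_filter_clusterLabel]
    exact sum_clusterM_fullM hps hassign hcard' (mem_clusterM_clusterLabel hcard' h) A' x'
  rw [hinit, hTR.discMean_lumpVec, clusterM_eq_filter_clusterLabel hcard']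
  exact summable_geometric_mul_vecMul_pow hδ0.le hδ1
    (fun h => prod_nonneg fun j _ => abs_nonneg _) (fullM_mem_rowStochastic fun j => hps (assign j))

/-- The discounted mean distribution of the `m`-strategy reduced chain
aggregates the discounted mean distribution of the full chain over each cluster. -/
theorem state_clustering_discounted_m (n m : ℕ) (hn : 2 ≤ n) (hm : 1 ≤ m)
    (ps : Fin m → Mem1) (hps : ∀ i, (ps i).valid)
    (ks : Fin m → ℕ) (hks : ∑ i, ks i = n - 1) (i0 : Fin m)
    (focal : Fin n) (hfocal : (focal : ℕ) = 0)
    (assign : Fin n → Fin m) (hassign : assign focal = i0)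
    (hcard : ∀ i, (Finset.univ.filter fun j => j ≠ focal ∧ assign j = i).card = ks i)
    (δ : ℝ) (hδ0 : 0 < δ) (hδ1 : δ < 1) :
    ∀ (A : Bool) (x : (i : Fin m) → Fin (ks i + 1)),
      discMean δ (redInitM ps ks i0) (redMM ps ks i0) (A, x)
        = ∑ h ∈ clusterM focal assign ks A x,
            discMean δ (fullInit (stratM ps assign)) (fullM (stratM ps assign)) h :=
  state_clustering_discounted_m_general n m ps hps ks i0 focal assign hassign hcard δ hδ0 hδ1
end
end

section
/- If v is a stationary distribution of the full transition matrix M (v_h ≥ 0, Σ_h v_h = 1, vM = v), then the clustered vector ν defined by ν_{(A,x_1,…,x_m)} := Σ_{h ∈ A_{A,x_1,…,x_m}} v_h is a stationary distribution of the m-strategy reduced transition matrix M'' (i.e., ν has nonnegative entries summing to 1 and νM'' = ν). -/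
open Finset Matrix
open scoped Classical

noncomputable section

lemma bern {ι : Type*} [DecidableEq ι] (B : Finset ι) (p : ℝ) (j : ℕ) :
    ∑ S ∈ B.powersetCard j, ∏ i ∈ B, (if i ∈ S then p else 1 - p)
      = (B.card.choose j : ℝ) * (p ^ j * (1 - p) ^ (B.card - j)) := by
  have h : ∀ S ∈ B.powersetCard j,
      ∏ i ∈ B, (if i ∈ S then p else 1 - p) = p ^ j * (1 - p) ^ (B.card - j) := by
    intro S hS
    obtain ⟨hsub, hcard⟩ := mem_powersetCard.mp hS
    rw [← Finset.union_sdiff_of_subset hsub, Finset.prod_union (Finset.disjoint_sdiff)]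
    rw [Finset.prod_congr rfl (fun i hi => if_pos hi),
      Finset.prod_congr rfl (fun i hi => if_neg (Finset.mem_sdiff.mp hi).2),
      Finset.prod_const, Finset.prod_const, Finset.card_sdiff_of_subset hsub, hcard]
    rw [Finset.union_sdiff_of_subset hsub]
  rw [Finset.sum_congr rfl h, Finset.sum_const, Finset.card_powersetCard, nsmul_eq_mul]

lemma split_powersetCard {ι : Type*} [DecidableEq ι] (B₁ B₂ : Finset ι) (hd : Disjoint B₁ B₂)
    (g h : Finset ι → ℝ) (t : ℕ) :
    ∑ S ∈ (B₁ ∪ B₂).powersetCard t, g (S ∩ B₁) * h (S ∩ B₂)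
      = ∑ j ∈ Finset.range (t+1),
          (∑ S₁ ∈ B₁.powersetCard j, g S₁) * (∑ S₂ ∈ B₂.powersetCard (t - j), h S₂) := by
  simp_rw [Finset.sum_mul_sum, ← Finset.sum_product']
  rw [Finset.sum_sigma' (Finset.range (t+1))
    (fun j => B₁.powersetCard j ×ˢ B₂.powersetCard (t-j)) (fun j p => g p.1 * h p.2)]
  refine Finset.sum_nbij' (fun S => ⟨(S ∩ B₁).card, (S ∩ B₁, S ∩ B₂)⟩)
    (fun p => p.2.1 ∪ p.2.2) ?_ ?_ ?_ ?_ ?_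
  · intro S hS
    obtain ⟨hsub, hcard⟩ := mem_powersetCard.mp hS
    have hdecomp : (S ∩ B₁) ∪ (S ∩ B₂) = S := by
      rw [← Finset.inter_union_distrib_left, Finset.inter_eq_left.mpr hsub]
    have hdisj : Disjoint (S ∩ B₁) (S ∩ B₂) :=
      hd.mono (Finset.inter_subset_right) (Finset.inter_subset_right)
    have hsum : (S ∩ B₁).card + (S ∩ B₂).card = t := by
      rw [← Finset.card_union_of_disjoint hdisj, hdecomp, hcard]
    simp only [Finset.mem_sigma, Finset.mem_range, Finset.mem_product, mem_powersetCard]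
    exact ⟨by omega, ⟨Finset.inter_subset_right, trivial⟩, ⟨Finset.inter_subset_right, by omega⟩⟩
  · intro p hp
    obtain ⟨hj, hp2⟩ := Finset.mem_sigma.mp hp
    obtain ⟨h1, h2⟩ := Finset.mem_product.mp hp2
    obtain ⟨hs1, hc1⟩ := mem_powersetCard.mp h1
    obtain ⟨hs2, hc2⟩ := mem_powersetCard.mp h2
    have hj' := Finset.mem_range.mp hj
    refine mem_powersetCard.mpr ⟨Finset.union_subset_union hs1 hs2, ?_⟩
    rw [Finset.card_union_of_disjoint (hd.mono hs1 hs2), hc1, hc2]; omega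
  · intro S hS
    dsimp only
    obtain ⟨hsub, hcard⟩ := mem_powersetCard.mp hS
    rw [← Finset.inter_union_distrib_left, Finset.inter_eq_left.mpr hsub]
  · intro p hp
    obtain ⟨hj, hp2⟩ := Finset.mem_sigma.mp hp
    obtain ⟨h1, h2⟩ := Finset.mem_product.mp hp2
    obtain ⟨hs1, hc1⟩ := mem_powersetCard.mp h1
    obtain ⟨hs2, hc2⟩ := mem_powersetCard.mp h2
    have e1 : (p.2.1 ∪ p.2.2) ∩ B₁ = p.2.1 := by
      rw [Finset.union_inter_distrib_right, Finset.inter_eq_left.mpr hs1,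
        Finset.disjoint_iff_inter_eq_empty.mp (Finset.disjoint_of_subset_left hs2 hd.symm), Finset.union_empty]
    have e2 : (p.2.1 ∪ p.2.2) ∩ B₂ = p.2.2 := by
      rw [Finset.union_inter_distrib_right, Finset.inter_eq_left.mpr hs2,
        Finset.disjoint_iff_inter_eq_empty.mp (Finset.disjoint_of_subset_left hs1 hd), Finset.empty_union]
    obtain ⟨j, S₁, S₂⟩ := p
    dsimp only at e1 e2 hc1 ⊢
    rw [e1, e2, hc1]
  · intro S hS; rfl

lemma block_sum {ι : Type*} [DecidableEq ι] (B : Finset ι) (c : ι → Prop) [DecidablePred c]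
    (pc pd : ℝ) (t : ℕ) :
    ∑ S ∈ B.powersetCard t, ∏ j ∈ B,
        (if j ∈ S then (if c j then pc else pd) else 1 - (if c j then pc else pd))
      = transfer pc pd (B.filter c).card B.card t := by
  set B₁ := B.filter c with hB₁
  set B₂ := B.filter (fun j => ¬ c j) with hB₂
  have hd : Disjoint B₁ B₂ := Finset.disjoint_filter_filter_not B B c
  have hU : B₁ ∪ B₂ = B := Finset.filter_union_filter_not_eq c B
  have hcard2 : B₂.card = B.card - B₁.card := by
    rw [hB₂, hB₁, Finset.filter_not, Finset.card_sdiff_of_subset (Finset.filter_subset c B)]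
  have key : ∀ S ⊆ B, ∏ j ∈ B,
      (if j ∈ S then (if c j then pc else pd) else 1 - (if c j then pc else pd))
      = (∏ j ∈ B₁, (if j ∈ S ∩ B₁ then pc else 1 - pc)) *
        (∏ j ∈ B₂, (if j ∈ S ∩ B₂ then pd else 1 - pd)) := by
    intro S hS
    rw [← hU, Finset.prod_union hd]
    congr 1
    · refine Finset.prod_congr rfl fun j hj => ?_
      have hc : c j := (Finset.mem_filter.mp hj).2
      rw [if_pos hc]
      by_cases hjS : j ∈ S
      · rw [if_pos hjS, if_pos (Finset.mem_inter.mpr ⟨hjS, hj⟩)]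
      · rw [if_neg hjS, if_neg (fun hmem => hjS (Finset.mem_inter.mp hmem).1)]
    · refine Finset.prod_congr rfl fun j hj => ?_
      have hc : ¬ c j := (Finset.mem_filter.mp hj).2
      rw [if_neg hc]
      by_cases hjS : j ∈ S
      · rw [if_pos hjS, if_pos (Finset.mem_inter.mpr ⟨hjS, hj⟩)]
      · rw [if_neg hjS, if_neg (fun hmem => hjS (Finset.mem_inter.mp hmem).1)]
  calc ∑ S ∈ B.powersetCard t, ∏ j ∈ B,
      (if j ∈ S then (if c j then pc else pd) else 1 - (if c j then pc else pd))
      = ∑ S ∈ (B₁ ∪ B₂).powersetCard t,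
          (∏ i ∈ B₁, (if i ∈ S ∩ B₁ then pc else 1 - pc)) *
          (∏ i ∈ B₂, (if i ∈ S ∩ B₂ then pd else 1 - pd)) := by
        rw [hU]
        exact Finset.sum_congr rfl fun S hS => key S (mem_powersetCard.mp hS).1
    _ = ∑ j ∈ Finset.range (t+1),
          (∑ S₁ ∈ B₁.powersetCard j, ∏ i ∈ B₁, (if i ∈ S₁ then pc else 1 - pc)) *
          (∑ S₂ ∈ B₂.powersetCard (t - j), ∏ i ∈ B₂, (if i ∈ S₂ then pd else 1 - pd)) :=
        split_powersetCard B₁ B₂ hd (fun S₁ => ∏ i ∈ B₁, (if i ∈ S₁ then pc else 1 - pc))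
          (fun S₂ => ∏ i ∈ B₂, (if i ∈ S₂ then pd else 1 - pd)) t
    _ = transfer pc pd B₁.card B.card t := by
        unfold transfer
        refine Finset.sum_congr rfl fun j hj => ?_
        rw [bern, bern, hcard2]
        ring

section Aux
variable {n m : ℕ}

lemma mem_clusterM_iff {focal : Fin n} {assign : Fin n → Fin m} {ks : Fin m → ℕ}
    {A : Bool} {x : (i : Fin m) → Fin (ks i + 1)} {h : FullState n} :
    h ∈ clusterM focal assign ks A x ↔
      h focal = A ∧
      ∀ i, (Finset.univ.filter fun j => j ≠ focal ∧ assign j = i ∧ h j = true).card = (x i : ℕ) := by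
  simp [clusterM]

lemma bcount_le (focal : Fin n) (assign : Fin n → Fin m) (h : FullState n) (i : Fin m) :
    (Finset.univ.filter fun j => j ≠ focal ∧ assign j = i ∧ h j = true).card
      ≤ (Finset.univ.filter fun j => j ≠ focal ∧ assign j = i).card := by
  apply Finset.card_le_card
  intro j hj
  simp only [Finset.mem_filter] at hj ⊢
  exact ⟨hj.1, hj.2.1, hj.2.2.1⟩

lemma nCoop_eq {focal : Fin n} {assign : Fin n → Fin m} {ks : Fin m → ℕ}
    {A : Bool} {x : (i : Fin m) → Fin (ks i + 1)} {h : FullState n}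
    (hh : h ∈ clusterM focal assign ks A x) :
    nCoop h = (∑ i, (x i : ℕ)) + (if A then 1 else 0) := by
  obtain ⟨hfA, hx⟩ := mem_clusterM_iff.mp hh
  have hsplit := Finset.card_filter_add_card_filter_not
    (s := Finset.univ.filter fun j : Fin n => h j = true) (p := fun j => j = focal)
  have h1 : ((Finset.univ.filter fun j : Fin n => h j = true).filter
      fun j => j = focal).card = (if A then 1 else 0) := by
    cases A with
    | true =>
      rw [show ((Finset.univ.filter fun j : Fin n => h j = true).filter fun j => j = focal)
          = {focal} by
        ext j
        simp only [Finset.mem_filter, Finset.mem_univ, true_and, Finset.mem_singleton]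
        constructor
        · rintro ⟨_, rfl⟩; rfl
        · rintro rfl; exact ⟨hfA, rfl⟩]
      simp
    | false =>
      rw [show ((Finset.univ.filter fun j : Fin n => h j = true).filter fun j => j = focal)
          = ∅ by
        ext j
        simp only [Finset.mem_filter, Finset.mem_univ, true_and, Finset.notMem_empty,
          iff_false, not_and]
        rintro hj rfl
        rw [hfA] at hj; exact Bool.false_ne_true hj]
      simp
  have h2 : ((Finset.univ.filter fun j : Fin n => h j = true).filter
      fun j => ¬ j = focal).card = ∑ i, (x i : ℕ) := by
    rw [Finset.card_eq_sum_card_fiberwise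
      (f := assign) (t := Finset.univ) (fun j _ => Finset.mem_univ _)]
    refine Finset.sum_congr rfl fun i _ => ?_
    rw [← hx i]
    congr 1
    ext j
    simp only [Finset.mem_filter, Finset.mem_univ, true_and]
    tauto
  unfold nCoop
  omega

end Aux

section Row
variable {n m : ℕ}

lemma blockfilter_eq (focal : Fin n) (assign : Fin n → Fin m) (h : FullState n) (i : Fin m) :
    ((Finset.univ.filter fun j => j ≠ focal ∧ assign j = i).filter fun j => h j = true)
      = Finset.univ.filter fun j => j ≠ focal ∧ assign j = i ∧ h j = true := by
  ext j
  simp only [Finset.mem_filter, Finset.mem_univ, true_and]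
  tauto

lemma row_sum (ps : Fin m → Mem1) (hps : ∀ i, (ps i).valid) (ks : Fin m → ℕ)
    (i0 : Fin m) (focal : Fin n) (assign : Fin n → Fin m) (hassign : assign focal = i0)
    (hcard : ∀ i, (Finset.univ.filter fun j => j ≠ focal ∧ assign j = i).card = ks i)
    (A : Bool) (x : (i : Fin m) → Fin (ks i + 1)) (h : FullState n)
    (hh : h ∈ clusterM focal assign ks A x)
    (A' : Bool) (x' : (i : Fin m) → Fin (ks i + 1)) :
    ∑ h' ∈ clusterM focal assign ks A' x', fullM (stratM ps assign) h h'
      = redMM ps ks i0 (A, x) (A', x') := by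
  obtain ⟨hfA, hx⟩ := mem_clusterM_iff.mp hh
  have hσ : nCoop h = (∑ i, (x i : ℕ)) + (if A then 1 else 0) := nCoop_eq hh
  set q : Fin n → ℝ :=
    fun j => (ps (assign j)).cond (h j) (nCoop h - if h j then 1 else 0) with hqdef
  set block : Fin m → Finset (Fin n) :=
    fun i => Finset.univ.filter fun j => j ≠ focal ∧ assign j = i with hblock
  set pci : Fin m → ℝ :=
    fun i => (ps i).cond true ((∑ i', (x i' : ℕ)) + (if A then 1 else 0) - 1) with hpci
  set pdi : Fin m → ℝ :=
    fun i => (ps i).cond false ((∑ i', (x i' : ℕ)) + (if A then 1 else 0)) with hpdi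
  have hblockcard : ∀ i, (block i).card = ks i := hcard
  have hblockfilter : ∀ (h₀ : FullState n) (x₀ : (i : Fin m) → Fin (ks i + 1)),
      (∀ i, (Finset.univ.filter fun j => j ≠ focal ∧ assign j = i ∧ h₀ j = true).card = (x₀ i : ℕ)) →
      ∀ i, ((block i).filter fun j => h₀ j = true).card = (x₀ i : ℕ) := by
    intro h₀ x₀ hx₀ i
    rw [hblock]
    rw [blockfilter_eq focal assign h₀ i]
    exact hx₀ i
  -- full matrix entry decomposition
  have hfull : ∀ h' : FullState n, fullM (stratM ps assign) h h'
      = (if h' focal then q focal else 1 - q focal) *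
        ∏ i, ∏ j ∈ block i, (if h' j then q j else 1 - q j) := by
    intro h'
    have h0 : fullM (stratM ps assign) h h' = ∏ j, (if h' j then q j else 1 - q j) := rfl
    rw [h0, ← Finset.mul_prod_erase Finset.univ _ (Finset.mem_univ focal)]
    congr 1
    rw [← Finset.prod_fiberwise_of_maps_to (s := Finset.univ.erase focal) (t := Finset.univ)
      (g := assign) (fun j _ => Finset.mem_univ _) (fun j => if h' j then q j else 1 - q j)]
    refine Finset.prod_congr rfl fun i _ => Finset.prod_congr ?_ fun _ _ => rfl
    ext j
    simp only [Finset.mem_filter, Finset.mem_erase, Finset.mem_univ, true_and, hblock,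
      and_true, and_comm]
  -- focal factor
  have hqf : q focal = (ps i0).cond A (∑ i, (x i : ℕ)) := by
    rw [hqdef]
    simp only
    rw [hassign, hfA, hσ]
    congr 1
    cases A <;> simp
  have hfocalval : ∀ h' ∈ clusterM focal assign ks A' x',
      (if h' focal then q focal else 1 - q focal)
        = |1 - (if A' then (1:ℝ) else 0) - (ps i0).cond A (∑ i, (x i : ℕ))| := by
    intro h' hh'
    have hfA' : h' focal = A' := (mem_clusterM_iff.mp hh').1
    have hv := (hps i0).2 A (∑ i, (x i : ℕ))
    have hv0 := hv.1
    have hv1 := hv.2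
    rw [hfA', hqf]
    cases A' with
    | true =>
      simp only [if_pos rfl, ite_true]
      rw [show (1:ℝ) - 1 - (ps i0).cond A (∑ i, (x i : ℕ))
          = -((ps i0).cond A (∑ i, (x i : ℕ))) by ring, abs_neg, abs_of_nonneg hv0]
    | false =>
      simp only [Bool.false_eq_true, if_false, ite_false]
      rw [show (1:ℝ) - 0 - (ps i0).cond A (∑ i, (x i : ℕ))
          = 1 - (ps i0).cond A (∑ i, (x i : ℕ)) by ring, abs_of_nonneg (by linarith)]
  -- q on a block
  have hqj : ∀ i, ∀ j ∈ block i, q j = if h j = true then pci i else pdi i := by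
    intro i j hj
    have hji : assign j = i := by
      rw [hblock] at hj
      simpa using (Finset.mem_filter.mp hj).2.2
    cases hjc : h j with
    | true => rw [hqdef]; simp only; rw [hji, hjc, if_pos rfl, hpci, hσ]; simp
    | false => rw [hqdef]; simp only; rw [hji, hjc, hpdi, hσ]; simp
  -- the bijection with the product of powersets
  have hbij : ∑ h' ∈ clusterM focal assign ks A' x',
      ∏ i, ∏ j ∈ block i, (if h' j then q j else 1 - q j)
    = ∑ g ∈ Fintype.piFinset (fun i => (block i).powersetCard (x' i : ℕ)),
      ∏ i, ∏ j ∈ block i, (if j ∈ g i then q j else 1 - q j) := by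
    refine Finset.sum_nbij' (fun h' => fun i => (block i).filter fun j => h' j = true)
      (fun g => fun j => if j = focal then A' else decide (j ∈ g (assign j))) ?_ ?_ ?_ ?_ ?_
    · intro h' hh'
      obtain ⟨hfA', hx'⟩ := mem_clusterM_iff.mp hh'
      refine Fintype.mem_piFinset.mpr fun i => Finset.mem_powersetCard.mpr
        ⟨Finset.filter_subset _ _, hblockfilter h' x' hx' i⟩
    · intro g hg
      have hgi : ∀ i, g i ⊆ block i ∧ (g i).card = (x' i : ℕ) := fun i =>
        Finset.mem_powersetCard.mp (Fintype.mem_piFinset.mp hg i)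
      refine mem_clusterM_iff.mpr ⟨by simp, fun i => ?_⟩
      have hset : (Finset.univ.filter fun j => j ≠ focal ∧ assign j = i ∧
          (if j = focal then A' else decide (j ∈ g (assign j))) = true) = g i := by
        ext j
        simp only [Finset.mem_filter, Finset.mem_univ, true_and]
        constructor
        · rintro ⟨hjf, rfl, hj⟩
          rw [if_neg hjf] at hj
          exact of_decide_eq_true hj
        · intro hj
          have hjb := (hgi i).1 hj
          rw [hblock] at hjb
          simp only [Finset.mem_filter, Finset.mem_univ, true_and] at hjb
          refine ⟨hjb.1, hjb.2, ?_⟩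
          rw [if_neg hjb.1, hjb.2]
          exact decide_eq_true hj
      rw [hset]
      exact (hgi i).2
    · intro h' hh'
      funext j
      by_cases hj : j = focal
      · subst hj
        simp [(mem_clusterM_iff.mp hh').1]
      · simp only [if_neg hj]
        cases hhj : h' j with
        | true => simp [hblock, hj, hhj]
        | false => simp [hblock, hj, hhj]
    · intro g hg
      have hgi : ∀ i, g i ⊆ block i ∧ (g i).card = (x' i : ℕ) := fun i =>
        Finset.mem_powersetCard.mp (Fintype.mem_piFinset.mp hg i)
      funext i
      ext j
      simp only [Finset.mem_filter]
      constructor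
      · rintro ⟨hjb, hj⟩
        rw [hblock] at hjb
        simp only [Finset.mem_filter, Finset.mem_univ, true_and] at hjb
        rw [if_neg hjb.1] at hj
        rw [← hjb.2]
        exact of_decide_eq_true hj
      · intro hj
        have hjb := (hgi i).1 hj
        have hjb' := hjb
        rw [hblock] at hjb'
        simp only [Finset.mem_filter, Finset.mem_univ, true_and] at hjb'
        exact ⟨hjb, by rw [if_neg hjb'.1, hjb'.2]; exact decide_eq_true hj⟩
    · intro h' hh'
      refine Finset.prod_congr rfl fun i _ => Finset.prod_congr rfl fun j hj => ?_
      refine if_congr ?_ rfl rfl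
      exact ⟨fun ht => Finset.mem_filter.mpr ⟨hj, ht⟩, fun hm => (Finset.mem_filter.mp hm).2⟩
  -- assemble
  calc ∑ h' ∈ clusterM focal assign ks A' x', fullM (stratM ps assign) h h'
      = ∑ h' ∈ clusterM focal assign ks A' x',
          |1 - (if A' then (1:ℝ) else 0) - (ps i0).cond A (∑ i, (x i : ℕ))| *
          ∏ i, ∏ j ∈ block i, (if h' j then q j else 1 - q j) := by
        refine Finset.sum_congr rfl fun h' hh' => ?_
        rw [hfull h', hfocalval h' hh']
    _ = |1 - (if A' then (1:ℝ) else 0) - (ps i0).cond A (∑ i, (x i : ℕ))| *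
        ∑ h' ∈ clusterM focal assign ks A' x',
          ∏ i, ∏ j ∈ block i, (if h' j then q j else 1 - q j) := by
        rw [Finset.mul_sum]
    _ = |1 - (if A' then (1:ℝ) else 0) - (ps i0).cond A (∑ i, (x i : ℕ))| *
        ∏ i, ∑ S ∈ (block i).powersetCard (x' i : ℕ),
          ∏ j ∈ block i, (if j ∈ S then q j else 1 - q j) := by
        rw [hbij]
        congr 1
        exact (Finset.prod_univ_sum (fun i => (block i).powersetCard (x' i : ℕ))
          (fun i S => ∏ j ∈ block i, (if j ∈ S then q j else 1 - q j))).symm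
    _ = |1 - (if A' then (1:ℝ) else 0) - (ps i0).cond A (∑ i, (x i : ℕ))| *
        ∏ i, transfer (pci i) (pdi i) (x i : ℕ) (ks i) (x' i : ℕ) := by
        congr 1
        refine Finset.prod_congr rfl fun i _ => ?_
        have hbs := block_sum (block i) (fun j => h j = true) (pci i) (pdi i) (x' i : ℕ)
        rw [hblockfilter h x hx i, hblockcard i] at hbs
        rw [← hbs]
        refine Finset.sum_congr rfl fun S hS => Finset.prod_congr rfl fun j hj => ?_
        rw [hqj i j hj]
    _ = redMM ps ks i0 (A, x) (A', x') := by
        simp only [redMM, Matrix.of_apply, hpci, hpdi]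
end Row
/-- Aggregating a stationary distribution of the full chain over the
`m`-strategy clusters yields a stationary distribution of the reduced chain `M''`. -/
theorem state_clustering_stationary_m (n m : ℕ) (hn : 2 ≤ n) (hm : 1 ≤ m)
    (ps : Fin m → Mem1) (hps : ∀ i, (ps i).valid)
    (ks : Fin m → ℕ) (hks : ∑ i, ks i = n - 1) (i0 : Fin m)
    (focal : Fin n) (hfocal : (focal : ℕ) = 0)
    (assign : Fin n → Fin m) (hassign : assign focal = i0)
    (hcard : ∀ i, (Finset.univ.filter fun j => j ≠ focal ∧ assign j = i).card = ks i)
    (v : FullState n → ℝ) (hv0 : ∀ h, 0 ≤ v h) (hv1 : ∑ h, v h = 1)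
    (hst : v ᵥ* fullM (stratM ps assign) = v) :
    (∀ (A : Bool) (x : (i : Fin m) → Fin (ks i + 1)),
        0 ≤ ∑ h ∈ clusterM focal assign ks A x, v h) ∧
    (∑ s : RStateM ks, ∑ h ∈ clusterM focal assign ks s.1 s.2, v h) = 1 ∧
    ((fun s : RStateM ks => ∑ h ∈ clusterM focal assign ks s.1 s.2, v h) ᵥ* redMM ps ks i0)
      = fun s : RStateM ks => ∑ h ∈ clusterM focal assign ks s.1 s.2, v h := by
  classical
  have hle : ∀ (h : FullState n) (i : Fin m),
      (Finset.univ.filter fun j => j ≠ focal ∧ assign j = i ∧ h j = true).card ≤ ks i :=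
    fun h i => (hcard i) ▸ bcount_le focal assign h i
  set F : FullState n → RStateM ks := fun h =>
    (h focal, fun i => ⟨min ((Finset.univ.filter fun j => j ≠ focal ∧ assign j = i ∧ h j = true).card) (ks i),
      Nat.lt_succ_of_le (min_le_right _ _)⟩) with hF
  have hfib : ∀ s : RStateM ks,
      clusterM focal assign ks s.1 s.2 = Finset.univ.filter fun h => F h = s := by
    rintro ⟨A, x⟩
    ext h
    simp only [mem_clusterM_iff, Finset.mem_filter, Finset.mem_univ, true_and, hF,
      Prod.mk.injEq, funext_iff]
    constructor
    · rintro ⟨h1, h2⟩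
      refine ⟨h1, fun i => ?_⟩
      apply Fin.ext
      show min ((Finset.univ.filter fun j => j ≠ focal ∧ assign j = i ∧ h j = true).card)
        (ks i) = (x i : ℕ)
      have h3 := hle h i
      have h4 := h2 i
      omega
    · rintro ⟨h1, h2⟩
      refine ⟨h1, fun i => ?_⟩
      have h4 : min ((Finset.univ.filter fun j => j ≠ focal ∧ assign j = i ∧ h j = true).card)
          (ks i) = (x i : ℕ) := congrArg Fin.val (h2 i)
      have h3 := hle h i
      omega
  refine ⟨fun A x => Finset.sum_nonneg fun h _ => hv0 h, ?_, ?_⟩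
  · calc ∑ s : RStateM ks, ∑ h ∈ clusterM focal assign ks s.1 s.2, v h
        = ∑ s : RStateM ks, ∑ h ∈ Finset.univ.filter fun h => F h = s, v h :=
          Finset.sum_congr rfl fun s _ => by rw [hfib s]
      _ = ∑ h, v h := Finset.sum_fiberwise _ _ _
      _ = 1 := hv1
  · funext s'
    obtain ⟨A', x'⟩ := s'
    have hsth : ∀ h' : FullState n, ∑ h, v h * fullM (stratM ps assign) h h' = v h' := by
      intro h'
      have := congrFun hst h'
      simpa [Matrix.vecMul, dotProduct] using this
    show ((fun s : RStateM ks => ∑ h ∈ clusterM focal assign ks s.1 s.2, v h)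
        ᵥ* redMM ps ks i0) (A', x')
      = ∑ h ∈ clusterM focal assign ks A' x', v h
    rw [show ((fun s : RStateM ks => ∑ h ∈ clusterM focal assign ks s.1 s.2, v h)
        ᵥ* redMM ps ks i0) (A', x')
      = ∑ s : RStateM ks, (∑ h ∈ clusterM focal assign ks s.1 s.2, v h) *
          redMM ps ks i0 s (A', x') by
        simp [Matrix.vecMul, dotProduct]]
    calc ∑ s : RStateM ks, (∑ h ∈ clusterM focal assign ks s.1 s.2, v h) *
          redMM ps ks i0 s (A', x')
        = ∑ s : RStateM ks, ∑ h ∈ clusterM focal assign ks s.1 s.2,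
            v h * ∑ h' ∈ clusterM focal assign ks A' x', fullM (stratM ps assign) h h' := by
          refine Finset.sum_congr rfl fun s _ => ?_
          rw [Finset.sum_mul]
          refine Finset.sum_congr rfl fun h hh => ?_
          obtain ⟨A, x⟩ := s
          rw [← row_sum ps hps ks i0 focal assign hassign hcard A x h hh A' x']
      _ = ∑ s : RStateM ks, ∑ h ∈ Finset.univ.filter fun h => F h = s,
            v h * ∑ h' ∈ clusterM focal assign ks A' x', fullM (stratM ps assign) h h' :=
          Finset.sum_congr rfl fun s _ => by rw [hfib s]
      _ = ∑ h, v h * ∑ h' ∈ clusterM focal assign ks A' x', fullM (stratM ps assign) h h' :=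
          Finset.sum_fiberwise _ _ _
      _ = ∑ h, ∑ h' ∈ clusterM focal assign ks A' x', v h * fullM (stratM ps assign) h h' :=
          Finset.sum_congr rfl fun h _ => Finset.mul_sum _ _ _
      _ = ∑ h' ∈ clusterM focal assign ks A' x', ∑ h, v h * fullM (stratM ps assign) h h' :=
          Finset.sum_comm
      _ = ∑ h' ∈ clusterM focal assign ks A' x', v h' :=
          Finset.sum_congr rfl fun h' _ => hsth h'
end
end

section
/- (Lumpability, two strategies) For every cluster index (A,x,y), every full state h ∈ A_{Axy}, and every cluster index (A',x',y'): Σ_{h' ∈ A_{A'x'y'}} m_{h,h'} = m'_{(A,x,y),(A',x',y')}. In particular, the sum of the full-chain transition probabilities from any state of a given cluster into a target cluster depends only on the two clusters and equals the corresponding entry of the reduced transition matrix M'. -/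
open Finset Matrix
open scoped Classical

noncomputable section

/-- Strategy assignment for two strategies: `assign i = true` means player `i` uses `p`,
otherwise player `i` uses `q`. -/
def strat2 {n : ℕ} (p q : Mem1) (assign : Fin n → Bool) : Fin n → Mem1 :=
  fun i => if assign i then p else q

/-- The cluster `A_{Axy}`: full states in which the focal player plays `A`, exactly `x`
of the `p`-co-players cooperate, and exactly `y` of the `q`-co-players cooperate. -/
def cluster {n : ℕ} (focal : Fin n) (assign : Fin n → Bool) (A : Bool) (x y : ℕ) :
    Finset (FullState n) :=
  Finset.univ.filter fun h =>
    h focal = A ∧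
    (Finset.univ.filter fun i => i ≠ focal ∧ assign i = true ∧ h i = true).card = x ∧
    (Finset.univ.filter fun i => i ≠ focal ∧ assign i = false ∧ h i = true).card = y

/-- The reduced transition matrix `M'` on the `2(k+1)(n-k)` clustered states `(A,x,y)`
with `A ∈ {C,D}`, `x ∈ {0,…,k}`, `y ∈ {0,…,n-1-k}`, for a focal player using `p`. -/
def redM (n k : ℕ) (p q : Mem1) :
    Matrix (Bool × Fin (k+1) × Fin (n-k)) (Bool × Fin (k+1) × Fin (n-k)) ℝ :=
  Matrix.of fun s s' =>
    match s, s' with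
    | (A, x, y), (A', x', y') =>
      |1 - (if A' then (1:ℝ) else 0) - p.cond A ((x:ℕ) + (y:ℕ))| *
      transfer (p.cond true ((x:ℕ) + (y:ℕ) + (if A then 1 else 0) - 1))
               (p.cond false ((x:ℕ) + (y:ℕ) + (if A then 1 else 0))) (x:ℕ) k (x':ℕ) *
      transfer (q.cond true ((x:ℕ) + (y:ℕ) + (if A then 1 else 0) - 1))
               (q.cond false ((x:ℕ) + (y:ℕ) + (if A then 1 else 0))) (y:ℕ) (n-1-k) (y':ℕ)

/-- The initial clustered distribution `μ(0)`. -/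
def redInit (n k : ℕ) (p q : Mem1) : Bool × Fin (k+1) × Fin (n-k) → ℝ :=
  fun s => match s with
  | (A, x, y) =>
    |1 - (if A then (1:ℝ) else 0) - p.init| *
    ((k.choose (x:ℕ) : ℝ) * p.init ^ (x:ℕ) * (1 - p.init) ^ (k - (x:ℕ))) *
    (((n-1-k).choose (y:ℕ) : ℝ) * q.init ^ (y:ℕ) * (1 - q.init) ^ ((n-1-k) - (y:ℕ)))

lemma sum_powersetCard_const_prod {ι : Type*} [DecidableEq ι] (A : Finset ι) (a b : ℝ) (m : ℕ) :
    ∑ S ∈ A.powersetCard m, ∏ i ∈ A, (if i ∈ S then a else b)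
      = (A.card.choose m : ℝ) * a ^ m * b ^ (A.card - m) := by
  have key : ∀ S ∈ A.powersetCard m, ∏ i ∈ A, (if i ∈ S then a else b) = a ^ m * b ^ (A.card - m) := by
    intro S hS
    rw [Finset.mem_powersetCard] at hS
    rw [Finset.prod_ite]
    have h1 : A.filter (fun i => i ∈ S) = S := by
      ext i; simp only [Finset.mem_filter]
      exact ⟨fun h => h.2, fun h => ⟨hS.1 h, h⟩⟩
    have h2 : (A.filter (fun i => ¬ i ∈ S)).card = A.card - m := by
      rw [Finset.filter_not, h1, Finset.card_sdiff_of_subset, hS.2]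
      · intro i hi; exact hS.1 hi
    rw [Finset.prod_const, Finset.prod_const, h1, hS.2, h2]
  rw [Finset.sum_congr rfl key, Finset.sum_const, Finset.card_powersetCard, nsmul_eq_mul, mul_assoc]

lemma sum_powersetCard_union {ι : Type*} [DecidableEq ι] (A B : Finset ι) (hd : Disjoint A B)
    (m : ℕ) (G : Finset ι → ℝ) :
    ∑ S ∈ (A ∪ B).powersetCard m, G S
      = ∑ j ∈ Finset.range (m+1), ∑ S₁ ∈ A.powersetCard j, ∑ S₂ ∈ B.powersetCard (m - j), G (S₁ ∪ S₂) := by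
  rw [← Finset.sum_fiberwise_of_maps_to (g := fun S => (S ∩ A).card)
    (t := Finset.range (m+1)) ?_ G]
  · refine Finset.sum_congr rfl fun j hj => ?_
    rw [← Finset.sum_product']
    refine Finset.sum_nbij' (fun S => (S ∩ A, S ∩ B)) (fun P => P.1 ∪ P.2) ?_ ?_ ?_ ?_ ?_
    · intro S hS
      simp only [Finset.mem_filter, Finset.mem_powersetCard] at hS
      obtain ⟨⟨hsub, hcard⟩, hcap⟩ := hS
      have hunion : (S ∩ A) ∪ (S ∩ B) = S := by
        rw [← Finset.inter_union_distrib_left, Finset.inter_eq_left.mpr hsub]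
      have hdisj : Disjoint (S ∩ A) (S ∩ B) :=
        hd.mono (Finset.inter_subset_right) (Finset.inter_subset_right)
      have hcards : (S ∩ A).card + (S ∩ B).card = m := by
        rw [← Finset.card_union_of_disjoint hdisj, hunion, hcard]
      simp only [Finset.mem_product, Finset.mem_powersetCard]
      exact ⟨⟨Finset.inter_subset_right, hcap⟩, Finset.inter_subset_right, by omega⟩
    · intro P hP
      simp only [Finset.mem_product, Finset.mem_powersetCard] at hP
      obtain ⟨⟨h1, h1c⟩, h2, h2c⟩ := hP
      have hdisj : Disjoint P.1 P.2 := hd.mono h1 h2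
      have hj' : j ≤ m := by have := Finset.mem_range.mp hj; omega
      simp only [Finset.mem_filter, Finset.mem_powersetCard]
      refine ⟨⟨Finset.union_subset (h1.trans Finset.subset_union_left) (h2.trans Finset.subset_union_right), ?_⟩, ?_⟩
      · rw [Finset.card_union_of_disjoint hdisj, h1c, h2c]; omega
      · have : (P.1 ∪ P.2) ∩ A = P.1 := by
          rw [Finset.union_inter_distrib_right, Finset.inter_eq_left.mpr h1,
            Finset.disjoint_iff_inter_eq_empty.mp (Finset.disjoint_of_subset_left h2 hd.symm), Finset.union_empty]
        rw [this, h1c]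
    · intro S hS
      simp only [Finset.mem_filter, Finset.mem_powersetCard] at hS
      dsimp only
      rw [← Finset.inter_union_distrib_left, Finset.inter_eq_left.mpr hS.1.1]
    · intro P hP
      simp only [Finset.mem_product, Finset.mem_powersetCard] at hP
      obtain ⟨⟨h1, h1c⟩, h2, h2c⟩ := hP
      have e1 : (P.1 ∪ P.2) ∩ A = P.1 := by
        rw [Finset.union_inter_distrib_right, Finset.inter_eq_left.mpr h1,
          Finset.disjoint_iff_inter_eq_empty.mp (Finset.disjoint_of_subset_left h2 hd.symm), Finset.union_empty]
      have e2 : (P.1 ∪ P.2) ∩ B = P.2 := by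
        rw [Finset.union_inter_distrib_right, Finset.inter_eq_left.mpr h2,
          Finset.disjoint_iff_inter_eq_empty.mp (Finset.disjoint_of_subset_left h1 hd), Finset.empty_union]
      cases P; simp_all
    · intro S hS
      simp only [Finset.mem_filter, Finset.mem_powersetCard] at hS
      dsimp only
      rw [← Finset.inter_union_distrib_left, Finset.inter_eq_left.mpr hS.1.1]
  · intro S hS
    rw [Finset.mem_powersetCard] at hS
    rw [Finset.mem_range]
    have hs : S ∩ A ⊆ S := Finset.inter_subset_left
    have := Finset.card_le_card hs
    omega


lemma sum_powersetCard_transfer {ι : Type*} [DecidableEq ι] (P Pc : Finset ι) (hPc : Pc ⊆ P)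
    (pc pd : ℝ) (c : ι → ℝ) (hc : ∀ i ∈ P, c i = if i ∈ Pc then pc else pd) (x' : ℕ) :
    ∑ S ∈ P.powersetCard x', ∏ i ∈ P, (if i ∈ S then c i else 1 - c i)
      = transfer pc pd Pc.card P.card x' := by
  classical
  set Pd := P \ Pc with hPd
  have hdisj : Disjoint Pc Pd := Finset.disjoint_sdiff
  have hPu : Pc ∪ Pd = P := Finset.union_sdiff_of_subset hPc
  have hPdcard : Pd.card = P.card - Pc.card := Finset.card_sdiff_of_subset hPc
  calc ∑ S ∈ P.powersetCard x', ∏ i ∈ P, (if i ∈ S then c i else 1 - c i)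
      = ∑ S ∈ (Pc ∪ Pd).powersetCard x', ∏ i ∈ P, (if i ∈ S then c i else 1 - c i) := by rw [hPu]
    _ = ∑ j ∈ Finset.range (x'+1), ∑ S₁ ∈ Pc.powersetCard j, ∑ S₂ ∈ Pd.powersetCard (x' - j),
          ∏ i ∈ P, (if i ∈ S₁ ∪ S₂ then c i else 1 - c i) :=
        sum_powersetCard_union Pc Pd hdisj x' _
    _ = transfer pc pd Pc.card P.card x' := by
        unfold transfer
        refine Finset.sum_congr rfl fun j hj => ?_
        have key : ∀ S₁ ∈ Pc.powersetCard j, ∀ S₂ ∈ Pd.powersetCard (x' - j),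
            ∏ i ∈ P, (if i ∈ S₁ ∪ S₂ then c i else 1 - c i)
              = (∏ i ∈ Pc, (if i ∈ S₁ then pc else 1 - pc)) *
                (∏ i ∈ Pd, (if i ∈ S₂ then pd else 1 - pd)) := by
          intro S₁ h1 S₂ h2
          rw [Finset.mem_powersetCard] at h1 h2
          rw [← hPu, Finset.prod_union hdisj]
          congr 1
          · refine Finset.prod_congr rfl fun i hi => ?_
            have hci : c i = pc := by rw [hc i (hPc hi), if_pos hi]
            have hmem : i ∈ S₁ ∪ S₂ ↔ i ∈ S₁ := by
              simp only [Finset.mem_union]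
              constructor
              · rintro (h | h)
                · exact h
                · exact absurd (h2.1 h) (by simp only [hPd, Finset.mem_sdiff] at *; tauto)
              · exact Or.inl
            rw [hci]
            by_cases hS : i ∈ S₁ <;> simp [hS, hmem]
          · refine Finset.prod_congr rfl fun i hi => ?_
            have hiP : i ∈ P := (Finset.sdiff_subset) hi
            have hinPc : i ∉ Pc := by simp only [hPd, Finset.mem_sdiff] at hi; exact hi.2
            have hci : c i = pd := by rw [hc i hiP, if_neg hinPc]
            have hmem : i ∈ S₁ ∪ S₂ ↔ i ∈ S₂ := by
              simp only [Finset.mem_union]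
              constructor
              · rintro (h | h)
                · exact absurd (h1.1 h) hinPc
                · exact h
              · exact Or.inr
            rw [hci]
            by_cases hS : i ∈ S₂ <;> simp [hS, hmem]
        rw [Finset.sum_congr rfl (fun S₁ h1 => Finset.sum_congr rfl (fun S₂ h2 => key S₁ h1 S₂ h2))]
        rw [← Finset.sum_mul_sum]
        rw [sum_powersetCard_const_prod, sum_powersetCard_const_prod, hPdcard]
        ring

/-- **lumpability, two strategies.** From any full state of a cluster,
the total transition probability into a target cluster equals the corresponding entry
of the reduced transition matrix. -/
theorem lumpability_two_strategies (n k : ℕ) (hn : 2 ≤ n) (hk : k ≤ n - 1)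
    (p q : Mem1) (hp : p.valid) (hq : q.valid)
    (focal : Fin n) (hfocal : (focal : ℕ) = 0)
    (assign : Fin n → Bool) (hassign : assign focal = true)
    (hcard : (Finset.univ.filter fun i => i ≠ focal ∧ assign i = true).card = k) :
    ∀ (A : Bool) (x : Fin (k+1)) (y : Fin (n-k)),
      ∀ h ∈ cluster focal assign A (x:ℕ) (y:ℕ),
        ∀ (A' : Bool) (x' : Fin (k+1)) (y' : Fin (n-k)),
          ∑ h' ∈ cluster focal assign A' (x':ℕ) (y':ℕ), fullM (strat2 p q assign) h h'
            = redM n k p q (A, x, y) (A', x', y') := by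
  classical
  intro A x y h hmem A' x' y'
  set P : Finset (Fin n) := Finset.univ.filter (fun i => i ≠ focal ∧ assign i = true) with hPdef
  set Q : Finset (Fin n) := Finset.univ.filter (fun i => i ≠ focal ∧ assign i = false) with hQdef
  have hPQ : Disjoint P Q := by
    rw [Finset.disjoint_left]
    intro i hi hj
    simp only [hPdef, hQdef, Finset.mem_filter] at hi hj
    rw [hi.2.2] at hj; exact absurd hj.2.2 (by simp)
  have hfP : focal ∉ P := by simp [hPdef]
  have hfQ : focal ∉ Q := by simp [hQdef]
  have hfPQ : focal ∉ P ∪ Q := by simp [hfP, hfQ]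
  have cover : insert focal (P ∪ Q) = (Finset.univ : Finset (Fin n)) := by
    ext i
    simp only [Finset.mem_insert, Finset.mem_union, hPdef, hQdef, Finset.mem_filter,
      Finset.mem_univ, true_and, iff_true]
    by_cases hi : i = focal
    · exact Or.inl hi
    · cases hA : assign i
      · exact Or.inr (Or.inr ⟨hi, rfl⟩)
      · exact Or.inr (Or.inl ⟨hi, rfl⟩)
  have hQcard : Q.card = n - 1 - k := by
    have h1 : (insert focal (P ∪ Q)).card = n := by rw [cover]; simp
    rw [Finset.card_insert_of_notMem hfPQ, Finset.card_union_of_disjoint hPQ] at h1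
    have : P.card = k := hcard
    omega
  -- rewrite the cluster filters
  have hfilt : ∀ (b : Bool) (g : Fin n → Bool),
      (Finset.univ.filter fun i => i ≠ focal ∧ assign i = b ∧ g i = true)
        = (Finset.univ.filter fun i => i ≠ focal ∧ assign i = b).filter (fun i => g i = true) := by
    intro b g
    rw [Finset.filter_filter]
    exact Finset.filter_congr fun i _ => by tauto
  -- unpack membership of h
  rw [cluster, Finset.mem_filter] at hmem
  obtain ⟨-, hA, hx, hy⟩ := hmem
  rw [hfilt true h] at hx
  rw [hfilt false h] at hy
  rw [← hPdef] at hx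
  rw [← hQdef] at hy
  -- number of cooperators
  have hσ : nCoop h = (if A then 1 else 0) + (x:ℕ) + (y:ℕ) := by
    rw [nCoop, ← cover, Finset.filter_insert, Finset.filter_union]
    have hcu : ((P.filter fun i => h i = true) ∪ (Q.filter fun i => h i = true)).card
        = (x:ℕ) + (y:ℕ) := by
      rw [Finset.card_union_of_disjoint (hPQ.mono (Finset.filter_subset _ _) (Finset.filter_subset _ _)),
        hx, hy]
    by_cases hAc : h focal = true
    · rw [if_pos hAc, Finset.card_insert_of_notMem
        (by
          intro hmem
          rcases Finset.mem_union.mp hmem with hh | hh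
          · exact hfP ((Finset.filter_subset _ _) hh)
          · exact hfQ ((Finset.filter_subset _ _) hh)), hcu]
      rw [hAc] at hA
      rw [← hA]
      simp only [if_true]
      omega
    · rw [if_neg hAc, hcu]
      have : A = false := by rw [← hA]; simpa using hAc
      rw [this]
      simp
  set fA : ℕ := if A then 1 else 0 with hfA
  -- the per-player cooperation probabilities
  set pcP : ℝ := p.cond true ((x:ℕ) + (y:ℕ) + fA - 1) with hpcP
  set pdP : ℝ := p.cond false ((x:ℕ) + (y:ℕ) + fA) with hpdP
  set pcQ : ℝ := q.cond true ((x:ℕ) + (y:ℕ) + fA - 1) with hpcQ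
  set pdQ : ℝ := q.cond false ((x:ℕ) + (y:ℕ) + fA) with hpdQ
  set c : Fin n → ℝ := fun i => if h i then pcP else pdP with hc
  set cq : Fin n → ℝ := fun i => if h i then pcQ else pdQ with hcq
  set F0 : ℝ := if A' then p.cond A ((x:ℕ) + (y:ℕ)) else 1 - p.cond A ((x:ℕ) + (y:ℕ)) with hF0
  -- the summand factorizes
  have summand : ∀ h' ∈ cluster focal assign A' (x':ℕ) (y':ℕ),
      fullM (strat2 p q assign) h h'
        = F0 * ((∏ i ∈ P, (if i ∈ P.filter (fun i => h' i = true) then c i else 1 - c i)) *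
            (∏ i ∈ Q, (if i ∈ Q.filter (fun i => h' i = true) then cq i else 1 - cq i))) := by
    intro h' hmem'
    rw [cluster, Finset.mem_filter] at hmem'
    obtain ⟨-, hA', -, -⟩ := hmem'
    simp only [fullM, Matrix.of_apply]
    rw [← cover, Finset.prod_insert hfPQ, Finset.prod_union hPQ]
    congr 1
    · -- focal factor
      have hstrat : strat2 p q assign focal = p := by rw [strat2, hassign]; rfl
      have harg : nCoop h - (if h focal then 1 else 0) = (x:ℕ) + (y:ℕ) := by
        rw [hA, hσ, hfA]; cases A <;> simp <;> omega
      rw [hstrat, harg, hA, hA', hF0]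
    congr 1
    · -- P factor
      refine Finset.prod_congr rfl fun i hi => ?_
      have hiP := hi
      simp only [hPdef, Finset.mem_filter, Finset.mem_univ, true_and] at hiP
      have hstrat : strat2 p q assign i = p := by rw [strat2, hiP.2]; rfl
      have hmem : (i ∈ P.filter fun i => h' i = true) ↔ h' i = true := by
        simp [Finset.mem_filter, hi]
      have harg : p.cond (h i) (nCoop h - if h i then 1 else 0) = c i := by
        simp only [hc]
        cases hhi : h i
        · simp only [Bool.false_eq_true, reduceIte]
          rw [hσ, hpdP]
          congr 1
          omega
        · simp only [reduceIte]
          rw [hσ, hpcP]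
          congr 1
          omega
      rw [hstrat, harg]
      by_cases hh' : h' i = true
      · rw [if_pos hh', if_pos (hmem.mpr hh')]
      · rw [if_neg (by simpa using hh'), if_neg (fun hmm => hh' (hmem.mp hmm))]
    · -- Q factor
      refine Finset.prod_congr rfl fun i hi => ?_
      have hiQ := hi
      simp only [hQdef, Finset.mem_filter, Finset.mem_univ, true_and] at hiQ
      have hstrat : strat2 p q assign i = q := by rw [strat2, hiQ.2]; rfl
      have hmem : (i ∈ Q.filter fun i => h' i = true) ↔ h' i = true := by
        simp [Finset.mem_filter, hi]
      have harg : q.cond (h i) (nCoop h - if h i then 1 else 0) = cq i := by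
        simp only [hcq]
        cases hhi : h i
        · simp only [Bool.false_eq_true, reduceIte]
          rw [hσ, hpdQ]
          congr 1
          omega
        · simp only [reduceIte]
          rw [hσ, hpcQ]
          congr 1
          omega
      rw [hstrat, harg]
      by_cases hh' : h' i = true
      · rw [if_pos hh', if_pos (hmem.mpr hh')]
      · rw [if_neg (by simpa using hh'), if_neg (fun hmm => hh' (hmem.mp hmm))]
  -- bijection between the cluster and pairs of subsets
  have key : ∑ h' ∈ cluster focal assign A' (x':ℕ) (y':ℕ), fullM (strat2 p q assign) h h'
      = ∑ ST ∈ (P.powersetCard (x':ℕ)) ×ˢ (Q.powersetCard (y':ℕ)),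
          F0 * ((∏ i ∈ P, (if i ∈ ST.1 then c i else 1 - c i)) *
            (∏ i ∈ Q, (if i ∈ ST.2 then cq i else 1 - cq i))) := by
    refine Finset.sum_nbij' (fun h' => (P.filter (fun i => h' i = true), Q.filter (fun i => h' i = true)))
      (fun ST => fun i => if i = focal then A' else decide (i ∈ ST.1 ∨ i ∈ ST.2)) ?_ ?_ ?_ ?_ ?_
    · intro h' hmem'
      rw [cluster, Finset.mem_filter] at hmem'
      obtain ⟨-, hA', hx', hy'⟩ := hmem'
      rw [hfilt true h'] at hx'
      rw [hfilt false h'] at hy'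
      simp only [Finset.mem_product, Finset.mem_powersetCard]
      exact ⟨⟨Finset.filter_subset _ _, hx'⟩, Finset.filter_subset _ _, hy'⟩
    · intro ST hST
      simp only [Finset.mem_product, Finset.mem_powersetCard] at hST
      obtain ⟨⟨hS, hSc⟩, hT, hTc⟩ := hST
      rw [cluster, Finset.mem_filter]
      refine ⟨Finset.mem_univ _, by simp, ?_, ?_⟩
      · rw [hfilt true _]
        have : P.filter (fun i => (if i = focal then A' else decide (i ∈ ST.1 ∨ i ∈ ST.2)) = true)
            = ST.1 := by
          ext i
          simp only [Finset.mem_filter]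
          constructor
          · rintro ⟨hiP, hcond⟩
            have hif : i ≠ focal := fun hh => hfP (hh ▸ hiP)
            rw [if_neg hif] at hcond
            rcases (by simpa using hcond) with hh | hh
            · exact hh
            · exact absurd (hT hh) (Finset.disjoint_left.mp hPQ hiP)
          · intro hiS
            have hiP := hS hiS
            have hif : i ≠ focal := fun hh => hfP (hh ▸ hiP)
            exact ⟨hiP, by rw [if_neg hif]; simp [hiS]⟩
        rw [this, hSc]
      · rw [hfilt false _]
        have : Q.filter (fun i => (if i = focal then A' else decide (i ∈ ST.1 ∨ i ∈ ST.2)) = true)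
            = ST.2 := by
          ext i
          simp only [Finset.mem_filter]
          constructor
          · rintro ⟨hiQ, hcond⟩
            have hif : i ≠ focal := fun hh => hfQ (hh ▸ hiQ)
            rw [if_neg hif] at hcond
            rcases (by simpa using hcond) with hh | hh
            · exact absurd (hS hh) (Finset.disjoint_right.mp hPQ hiQ)
            · exact hh
          · intro hiT
            have hiQ := hT hiT
            have hif : i ≠ focal := fun hh => hfQ (hh ▸ hiQ)
            exact ⟨hiQ, by rw [if_neg hif]; simp [hiT]⟩
        rw [this, hTc]
    · intro h' hmem'
      rw [cluster, Finset.mem_filter] at hmem'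
      obtain ⟨-, hA', -, -⟩ := hmem'
      funext i
      dsimp only
      by_cases hif : i = focal
      · rw [if_pos hif, hif, hA']
      · rw [if_neg hif]
        have hiPQ : i ∈ P ∪ Q := by
          have := (cover ▸ Finset.mem_univ i : i ∈ insert focal (P ∪ Q))
          rcases Finset.mem_insert.mp this with hh | hh
          · exact absurd hh hif
          · exact hh
        cases hh' : h' i
        · simp only [Finset.mem_filter]
          simp [hh']
        · rcases Finset.mem_union.mp hiPQ with hh | hh
          · simp only [Finset.mem_filter]
            simp [hh, hh']
          · simp only [Finset.mem_filter]
            simp [hh, hh']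
    · intro ST hST
      simp only [Finset.mem_product, Finset.mem_powersetCard] at hST
      obtain ⟨⟨hS, hSc⟩, hT, hTc⟩ := hST
      have e1 : P.filter (fun i => (if i = focal then A' else decide (i ∈ ST.1 ∨ i ∈ ST.2)) = true)
          = ST.1 := by
        ext i
        simp only [Finset.mem_filter]
        constructor
        · rintro ⟨hiP, hcond⟩
          have hif : i ≠ focal := fun hh => hfP (hh ▸ hiP)
          rw [if_neg hif] at hcond
          rcases (by simpa using hcond) with hh | hh
          · exact hh
          · exact absurd (hT hh) (Finset.disjoint_left.mp hPQ hiP)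
        · intro hiS
          have hiP := hS hiS
          have hif : i ≠ focal := fun hh => hfP (hh ▸ hiP)
          exact ⟨hiP, by rw [if_neg hif]; simp [hiS]⟩
      have e2 : Q.filter (fun i => (if i = focal then A' else decide (i ∈ ST.1 ∨ i ∈ ST.2)) = true)
          = ST.2 := by
        ext i
        simp only [Finset.mem_filter]
        constructor
        · rintro ⟨hiQ, hcond⟩
          have hif : i ≠ focal := fun hh => hfQ (hh ▸ hiQ)
          rw [if_neg hif] at hcond
          rcases (by simpa using hcond) with hh | hh
          · exact absurd (hS hh) (Finset.disjoint_right.mp hPQ hiQ)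
          · exact hh
        · intro hiT
          have hiQ := hT hiT
          have hif : i ≠ focal := fun hh => hfQ (hh ▸ hiQ)
          exact ⟨hiQ, by rw [if_neg hif]; simp [hiT]⟩
      exact Prod.ext e1 e2
    · intro h' hmem'
      exact summand h' hmem'
  rw [key]
  rw [Finset.sum_product]
  have pull : ∑ S ∈ P.powersetCard (x':ℕ), ∑ T ∈ Q.powersetCard (y':ℕ),
      F0 * ((∏ i ∈ P, (if i ∈ S then c i else 1 - c i)) *
        (∏ i ∈ Q, (if i ∈ T then cq i else 1 - cq i)))
    = F0 * ((∑ S ∈ P.powersetCard (x':ℕ), ∏ i ∈ P, (if i ∈ S then c i else 1 - c i)) *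
        (∑ T ∈ Q.powersetCard (y':ℕ), ∏ i ∈ Q, (if i ∈ T then cq i else 1 - cq i))) := by
    rw [Finset.sum_mul_sum, Finset.mul_sum]
    refine Finset.sum_congr rfl fun S _ => ?_
    rw [Finset.mul_sum]
  rw [pull]
  -- apply the transfer lemma to both blocks
  have hPc : (P.filter fun i => h i = true) ⊆ P := Finset.filter_subset _ _
  have hQc : (Q.filter fun i => h i = true) ⊆ Q := Finset.filter_subset _ _
  have htP : ∑ S ∈ P.powersetCard (x':ℕ), ∏ i ∈ P, (if i ∈ S then c i else 1 - c i)
      = transfer pcP pdP (x:ℕ) k (x':ℕ) := by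
    rw [sum_powersetCard_transfer P (P.filter fun i => h i = true) hPc pcP pdP c
      (fun i hi => by
        simp only [hc]
        by_cases hhi : h i = true
        · rw [if_pos hhi, if_pos (Finset.mem_filter.mpr ⟨hi, hhi⟩)]
        · have hnm : i ∉ P.filter (fun i => h i = true) :=
            fun hmm => hhi (Finset.mem_filter.mp hmm).2
          rw [if_neg hhi, if_neg hnm])
      (x':ℕ), hx, hcard]
  have htQ : ∑ T ∈ Q.powersetCard (y':ℕ), ∏ i ∈ Q, (if i ∈ T then cq i else 1 - cq i)
      = transfer pcQ pdQ (y:ℕ) (n-1-k) (y':ℕ) := by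
    rw [sum_powersetCard_transfer Q (Q.filter fun i => h i = true) hQc pcQ pdQ cq
      (fun i hi => by
        simp only [hcq]
        by_cases hhi : h i = true
        · rw [if_pos hhi, if_pos (Finset.mem_filter.mpr ⟨hi, hhi⟩)]
        · have hnm : i ∉ Q.filter (fun i => h i = true) :=
            fun hmm => hhi (Finset.mem_filter.mp hmm).2
          rw [if_neg hhi, if_neg hnm])
      (y':ℕ), hy, hQcard]
  rw [htP, htQ]
  -- final comparison with redM
  rw [redM]
  have habs : |1 - (if A' then (1:ℝ) else 0) - p.cond A ((x:ℕ) + (y:ℕ))| = F0 := by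
    obtain ⟨h0, h1⟩ := (hp.2 A ((x:ℕ) + (y:ℕ)))
    rw [hF0]
    cases A' <;> simp only [if_pos, if_neg, Bool.false_eq_true, if_false, if_true]
    · rw [abs_of_nonneg (by linarith)]; ring_nf
    · rw [show (1:ℝ) - 1 - p.cond A ((x:ℕ)+(y:ℕ)) = -(p.cond A ((x:ℕ)+(y:ℕ))) by ring,
        abs_neg, abs_of_nonneg h0]
  show F0 * _ = _
  rw [Matrix.of_apply]
  dsimp only
  rw [habs, hpcP, hpdP, hpcQ, hpdQ, hfA]
  ring
end
end
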